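/- Let p be an odd prime. For each α ∈ {1,…,p−1}, let A_α be the p×p binary array whose row i (for i ∈ {0,…,p−1}) is v_r, where r ∈ {0,…,p−1} is the unique solution of r ≡ αi (mod p). Then for all distinct α, β ∈ {1,…,p−1}: (a) |A_α A_β|_{(1,0)} = |A_α A_β|_{(0,1)} = (p²−1)/4; (b) |A_α A_β|_{(0,0)} = (p−1)²/4; (c) |A_α A_β|_{(1,1)} = (p+1)²/4. -/

import Mathlib

/-- The vector `v` of length `p` with `(p+1)/2` ones followed by `(p-1)/2` zeros,
shifted cyclically `i` times: position `j` holds the original entry at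
`(j - i) mod p`. -/
def shiftedV (p i : ℕ) (j : Fin p) : Fin 2 :=
  if ((j : ℕ) + (p - i % p)) % p < (p + 1) / 2 then 1 else 0

/-- `|ab|_{(x,y)}`: the number of positions `j` with `a j = x` and `b j = y`. -/
def vcount (p : ℕ) (a b : Fin p → Fin 2) (x y : Fin 2) : ℕ :=
  ((Finset.univ : Finset (Fin p)).filter (fun j => a j = x ∧ b j = y)).card

/-- The p × p array A_α whose row i is v_r with r ≡ α·i (mod p). -/
def Aarr (p α : ℕ) (i j : Fin p) : Fin 2 := shiftedV p (α * (i : ℕ)) j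

/--  for p × p binary arrays. -/
def acount (p : ℕ) (A B : Fin p → Fin p → Fin 2) (x y : Fin 2) : ℕ :=
  ((Finset.univ : Finset (Fin p × Fin p)).filter
      (fun c => A c.1 c.2 = x ∧ B c.1 c.2 = y)).card

/-! Row `i` of `A_α` is `j ↦ v (j - α i)` over `ZMod p`. Since `α ≢ β (mod p)`, the map
`(i, j) ↦ (j - α i, j - β i)` is a bijection of `(ZMod p)²`, so `|A_α A_β|_{(x,y)}` factors as
(number of `x`'s in `v`) · (number of `y`'s in `v`), with `(p+1)/2` ones and `(p-1)/2` zeros. -/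

open Finset Function

lemma ZMod.val_natCast_sub_natCast {p : ℕ} [NeZero p] (j m : ℕ) :
    ((j : ZMod p) - m).val = (j + (p - m % p)) % p := by
  rw [← ZMod.val_natCast, Nat.cast_add, Nat.cast_sub (Nat.mod_lt m (NeZero.pos p)).le,
    ZMod.natCast_self, ZMod.natCast_mod, zero_sub, sub_eq_add_neg]

lemma ZMod.natCast_fin_bijective (p : ℕ) [NeZero p] :
    Bijective (fun i : Fin p => (i : ZMod p)) := by
  refine (Fintype.bijective_iff_injective_and_card _).mpr ⟨fun i j hij => ?_, by simp⟩
  have := congrArg ZMod.val hij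
  simp only [ZMod.val_cast_of_lt i.isLt, ZMod.val_cast_of_lt j.isLt] at this
  exact Fin.ext this

/-- The paper's `v`, indexed by `ZMod p`, so that `v_r j = baseV p (j - r)`. -/
def baseV (p : ℕ) (u : ZMod p) : Fin 2 := if u.val < (p + 1) / 2 then 1 else 0

lemma shiftedV_eq_baseV {p : ℕ} [NeZero p] (m : ℕ) (j : Fin p) :
    shiftedV p m j = baseV p ((j : ZMod p) - m) := by
  rw [shiftedV, baseV, ZMod.val_natCast_sub_natCast]

lemma Aarr_eq_baseV {p : ℕ} [NeZero p] (α : ℕ) (i j : Fin p) :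
    Aarr p α i j = baseV p ((j : ZMod p) - α * i) := by
  rw [Aarr, shiftedV_eq_baseV, Nat.cast_mul]

lemma card_baseV_eq_one (p : ℕ) [NeZero p] : #{u : ZMod p | baseV p u = 1} = (p + 1) / 2 := by
  have : #{i : Fin p | (i : ℕ) < (p + 1) / 2} = (p + 1) / 2 := by
    rw [Fin.card_filter_val_lt]; omega
  rw [← this]
  refine (card_bijective _ (ZMod.natCast_fin_bijective p) fun i => ?_).symm
  simp [baseV, ZMod.val_cast_of_lt i.isLt]

lemma card_baseV_eq_zero (p : ℕ) [NeZero p] :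
    #{u : ZMod p | baseV p u = 0} = p - (p + 1) / 2 := by
  have hsplit := card_filter_add_card_filter_not (s := univ) (fun u : ZMod p => baseV p u = 1)
  have hne : ∀ u, ¬ baseV p u = 1 ↔ baseV p u = 0 := fun u => by
    unfold baseV; split_ifs <;> decide
  simp only [hne, card_baseV_eq_one, card_univ, ZMod.card] at hsplit
  omega

lemma sub_mul_pair_injective {R : Type*} [CommRing R] [NoZeroDivisors R] {a b : R} (hab : a ≠ b) :
    Injective (fun c : R × R => (c.2 - a * c.1, c.2 - b * c.1)) := by
  rintro ⟨i, j⟩ ⟨i', j'⟩ h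
  simp only [Prod.mk.injEq] at h
  have hi : i = i' := by
    have : (b - a) * (i - i') = 0 := by linear_combination h.1 - h.2
    simpa [sub_eq_zero, sub_ne_zero.mpr hab.symm] using this
  subst hi
  simpa using h.1

lemma card_filter_sub_mul_pair {R : Type*} [CommRing R] [NoZeroDivisors R] [Fintype R]
    [DecidableEq R] {a b : R} (hab : a ≠ b) (P Q : R → Prop) [DecidablePred P] [DecidablePred Q] :
    #{c : R × R | P (c.2 - a * c.1) ∧ Q (c.2 - b * c.1)} = #{u | P u} * #{u | Q u} := by
  rw [← card_product, ← filter_product, univ_product_univ]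
  exact card_bijective _ (Finite.injective_iff_bijective.mp (sub_mul_pair_injective hab))
    (by simp)

lemma acount_Aarr {p : ℕ} [Fact p.Prime] {α β : ℕ} (hαβ : (α : ZMod p) ≠ β) (x y : Fin 2) :
    acount p (Aarr p α) (Aarr p β) x y =
      #{u : ZMod p | baseV p u = x} * #{u : ZMod p | baseV p u = y} := by
  rw [← card_filter_sub_mul_pair hαβ, acount]
  have hcast := ZMod.natCast_fin_bijective p
  exact card_bijective _ (hcast.prodMap hcast) (by simp [Aarr_eq_baseV])

lemma mul_halves_of_odd {p : ℕ} (hp : Odd p) :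
    (p + 1) / 2 * (p - (p + 1) / 2) = (p ^ 2 - 1) / 4 ∧
    (p - (p + 1) / 2) * (p - (p + 1) / 2) = (p - 1) ^ 2 / 4 ∧
    (p + 1) / 2 * ((p + 1) / 2) = (p + 1) ^ 2 / 4 := by
  obtain ⟨k, rfl⟩ := hp
  have h1 : (2 * k + 1 + 1) / 2 = k + 1 := by omega
  have h2 : 2 * k + 1 - (k + 1) = k := by omega
  have h3 : (2 * k + 1) ^ 2 - 1 = 4 * ((k + 1) * k) := by
    rw [Nat.sub_eq_of_eq_add]; ring
  rw [h1, h2, h3, Nat.add_sub_cancel, show 2 * k + 1 + 1 = 2 * (k + 1) by ring, mul_pow, mul_pow]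
  norm_num [Nat.mul_div_cancel_left, sq]

theorem count_A_alpha_A_beta_general (p : ℕ) (hp : p.Prime) (hodd : Odd p)
    (α β : ℕ) (hα2 : α ≤ p - 1) (hβ2 : β ≤ p - 1)
    (hαβ : α ≠ β) :
    acount p (Aarr p α) (Aarr p β) 1 0 = (p ^ 2 - 1) / 4 ∧
    acount p (Aarr p α) (Aarr p β) 0 1 = (p ^ 2 - 1) / 4 ∧
    acount p (Aarr p α) (Aarr p β) 0 0 = (p - 1) ^ 2 / 4 ∧
    acount p (Aarr p α) (Aarr p β) 1 1 = (p + 1) ^ 2 / 4 := by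
  have : Fact p.Prime := ⟨hp⟩
  have hαβ' : (α : ZMod p) ≠ β := fun h => hαβ <| by
    have := congrArg ZMod.val h
    rwa [ZMod.val_cast_of_lt (by omega), ZMod.val_cast_of_lt (by omega)] at this
  obtain ⟨h10, h00, h11⟩ := mul_halves_of_odd hodd
  simp only [acount_Aarr hαβ', card_baseV_eq_one, card_baseV_eq_zero]
  exact ⟨h10, by rwa [mul_comm], h00, h11⟩

theorem count_A_alpha_A_beta (p : ℕ) (hp : p.Prime) (hodd : Odd p)
    (α β : ℕ) (hα1 : 1 ≤ α) (hα2 : α ≤ p - 1) (hβ1 : 1 ≤ β) (hβ2 : β ≤ p - 1)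
    (hαβ : α ≠ β) :
    acount p (Aarr p α) (Aarr p β) 1 0 = (p ^ 2 - 1) / 4 ∧
    acount p (Aarr p α) (Aarr p β) 0 1 = (p ^ 2 - 1) / 4 ∧
    acount p (Aarr p α) (Aarr p β) 0 0 = (p - 1) ^ 2 / 4 ∧
    acount p (Aarr p α) (Aarr p β) 1 1 = (p + 1) ^ 2 / 4 :=
  count_A_alpha_A_beta_general p hp hodd α β hα2 hβ2 hαβ
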